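/- Fix Lv ∈ ℝ^{m2×n}; set A_k = A + B2 Lv and Q_k = Q − γ² LvᵀLv; for symmetric P with S(P) invertible set A(P) = A_k + B1 K(P) and C(P) = C + D K(P). Assume P* is a symmetric solution of the inner GARE at Lv with S(P*) invertible and (K(P*), Lv) stabilizing; let δ₀ > 0 be such that for every symmetric P with ‖P − P*‖_F < δ₀, S(P) is invertible and (K(P), Lv) is stabilizing; and let d > 0 be such that for all symmetric P̂ with ‖P̂ − P*‖_F < δ₀ and all symmetric ΔM with ‖ΔM‖_F ≤ d, the block [M(P̂)+ΔM]_{uu} is invertible and ( −[M(P̂)+ΔM]_{uu}⁻¹[M(P̂)+ΔM]_{ux} , Lv ) is stabilizing. Then there exists c₃ > 0 (depending only on δ₀ and the data) such that for every c₂ > 0 there exists δ ∈ (0, d], independent of P̂, with the following property: for all symmetric P̂ with ‖P̂ − P*‖_F < δ₀ and all symmetric ΔM with ‖ΔM‖_F < δ, writing L̂ = −[M(P̂)+ΔM]_{uu}⁻¹[M(P̂)+ΔM]_{ux}, the unique symmetric solutions Π₁ of 𝓛_{A_k+B1 L̂, C+D L̂}(Π₁) = −Q_k − L̂ᵀRL̂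 and Π₂ of 𝓛_{A(P̂),C(P̂)}(Π₂) = −Q_k − N(P̂)ᵀS(P̂)⁻¹RS(P̂)⁻¹N(P̂) satisfy ‖Π₁ − Π₂‖_F ≤ c₃ ‖ΔM‖_F < c₂. -/

import Mathlib

open Matrix Filter
open scoped Kronecker

noncomputable section

/-- Frobenius norm of a real matrix. -/
def frobNorm {I J : Type*} [Fintype I] [Fintype J] (M : Matrix I J ℝ) : ℝ :=
  Real.sqrt (∑ i, ∑ j, (M i j) ^ 2)

/-- Spectral norm (induced 2-norm) of a real matrix. -/
def specNorm {I J : Type*} [Fintype I] [Fintype J] [DecidableEq J] (M : Matrix I J ℝ) : ℝ :=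
  @norm _ (Matrix.instL2OpNormedAddCommGroup (m := I) (n := J) (𝕜 := ℝ)).toNorm M

/-- Every complex eigenvalue of `Iₙ ⊗ Xᵀ + Xᵀ ⊗ Iₙ + Zᵀ ⊗ Zᵀ` has negative real part. -/
def HurwitzKron {n : ℕ} (X Z : Matrix (Fin n) (Fin n) ℝ) : Prop :=
  ∀ μ ∈ spectrum ℂ
      (((1 : Matrix (Fin n) (Fin n) ℝ) ⊗ₖ Xᵀ + Xᵀ ⊗ₖ (1 : Matrix (Fin n) (Fin n) ℝ)
          + Zᵀ ⊗ₖ Zᵀ).map (Complex.ofReal ·)),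
    μ.re < 0

/-- The generalized Lyapunov operator `𝓛_{X,Z}(Y) = XᵀY + YX + ZᵀYZ`. -/
def lyapOp {n : ℕ} (X Z Y : Matrix (Fin n) (Fin n) ℝ) : Matrix (Fin n) (Fin n) ℝ :=
  Xᵀ * Y + Y * X + Zᵀ * Y * Z

/-- A gain pair `(Lu, Lv)` is stabilizing (mean-square stability of the closed loop). -/
def Stabilizing {n m1 m2 : ℕ} (A C : Matrix (Fin n) (Fin n) ℝ)
    (B1 D : Matrix (Fin n) (Fin m1) ℝ) (B2 : Matrix (Fin n) (Fin m2) ℝ)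
    (Lu : Matrix (Fin m1) (Fin n) ℝ) (Lv : Matrix (Fin m2) (Fin n) ℝ) : Prop :=
  HurwitzKron (A + B1 * Lu + B2 * Lv) (C + D * Lu)

/-- `N(P) = B1ᵀP + DᵀPC`. -/
def Nmat {n m1 : ℕ} (C : Matrix (Fin n) (Fin n) ℝ) (B1 D : Matrix (Fin n) (Fin m1) ℝ)
    (P : Matrix (Fin n) (Fin n) ℝ) : Matrix (Fin m1) (Fin n) ℝ :=
  B1ᵀ * P + Dᵀ * P * C

/-- `S(P) = R + DᵀPD`. -/
def Smat {n m1 : ℕ} (R : Matrix (Fin m1) (Fin m1) ℝ) (D : Matrix (Fin n) (Fin m1) ℝ)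
    (P : Matrix (Fin n) (Fin n) ℝ) : Matrix (Fin m1) (Fin m1) ℝ :=
  R + Dᵀ * P * D

/-- `K(P) = −S(P)⁻¹ N(P)`. -/
def Kgain {n m1 : ℕ} (C : Matrix (Fin n) (Fin n) ℝ) (B1 D : Matrix (Fin n) (Fin m1) ℝ)
    (R : Matrix (Fin m1) (Fin m1) ℝ) (P : Matrix (Fin n) (Fin n) ℝ) :
    Matrix (Fin m1) (Fin n) ℝ :=
  -((Smat R D P)⁻¹ * Nmat C B1 D P)

/-- The symmetric block matrix `M(P)` of the paper. -/
def Mblk {n m1 m2 : ℕ} (A C Q : Matrix (Fin n) (Fin n) ℝ)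
    (B1 D : Matrix (Fin n) (Fin m1) ℝ) (B2 : Matrix (Fin n) (Fin m2) ℝ)
    (R : Matrix (Fin m1) (Fin m1) ℝ) (γ : ℝ) (P : Matrix (Fin n) (Fin n) ℝ) :
    Matrix (Fin n ⊕ Fin m1 ⊕ Fin m2) (Fin n ⊕ Fin m1 ⊕ Fin m2) ℝ :=
  Matrix.of fun i j =>
    match i, j with
    | Sum.inl i, Sum.inl j => (Q + Aᵀ * P + P * A + Cᵀ * P * C) i j
    | Sum.inl i, Sum.inr (Sum.inl j) => (Nmat C B1 D P)ᵀ i j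
    | Sum.inl i, Sum.inr (Sum.inr j) => (B2ᵀ * P)ᵀ i j
    | Sum.inr (Sum.inl i), Sum.inl j => (Nmat C B1 D P) i j
    | Sum.inr (Sum.inl i), Sum.inr (Sum.inl j) => (Smat R D P) i j
    | Sum.inr (Sum.inl _), Sum.inr (Sum.inr _) => 0
    | Sum.inr (Sum.inr i), Sum.inl j => (B2ᵀ * P) i j
    | Sum.inr (Sum.inr _), Sum.inr (Sum.inl _) => 0
    | Sum.inr (Sum.inr i), Sum.inr (Sum.inr j) =>
        ((-γ ^ 2) • (1 : Matrix (Fin m2) (Fin m2) ℝ)) i j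

/-- The `uu` block of an `(n+m1+m2)×(n+m1+m2)` matrix. -/
def blkUU {n m1 m2 : ℕ}
    (M : Matrix (Fin n ⊕ Fin m1 ⊕ Fin m2) (Fin n ⊕ Fin m1 ⊕ Fin m2) ℝ) :
    Matrix (Fin m1) (Fin m1) ℝ :=
  Matrix.of fun i j => M (Sum.inr (Sum.inl i)) (Sum.inr (Sum.inl j))

/-- The `ux` block of an `(n+m1+m2)×(n+m1+m2)` matrix. -/
def blkUX {n m1 m2 : ℕ}
    (M : Matrix (Fin n ⊕ Fin m1 ⊕ Fin m2) (Fin n ⊕ Fin m1 ⊕ Fin m2) ℝ) :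
    Matrix (Fin m1) (Fin n) ℝ :=
  Matrix.of fun i j => M (Sum.inr (Sum.inl i)) (Sum.inl j)

/-- The inner GARE at the gain `Lv`:
`(A+B2 Lv)ᵀP + P(A+B2 Lv) + CᵀPC + Q − γ² LvᵀLv − N(P)ᵀS(P)⁻¹N(P) = 0`. -/
def InnerGARE {n m1 m2 : ℕ} (A C Q : Matrix (Fin n) (Fin n) ℝ)
    (B1 D : Matrix (Fin n) (Fin m1) ℝ) (B2 : Matrix (Fin n) (Fin m2) ℝ)
    (R : Matrix (Fin m1) (Fin m1) ℝ) (γ : ℝ) (Lv : Matrix (Fin m2) (Fin n) ℝ)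
    (P : Matrix (Fin n) (Fin n) ℝ) : Prop :=
  (A + B2 * Lv)ᵀ * P + P * (A + B2 * Lv) + Cᵀ * P * C + Q - (γ ^ 2) • (Lvᵀ * Lv)
    - (Nmat C B1 D P)ᵀ * (Smat R D P)⁻¹ * Nmat C B1 D P = 0

/-- The full game algebraic Riccati equation. -/
def FullGARE {n m1 m2 : ℕ} (A C Q : Matrix (Fin n) (Fin n) ℝ)
    (B1 D : Matrix (Fin n) (Fin m1) ℝ) (B2 : Matrix (Fin n) (Fin m2) ℝ)
    (R : Matrix (Fin m1) (Fin m1) ℝ) (γ : ℝ) (P : Matrix (Fin n) (Fin n) ℝ) : Prop :=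
  Aᵀ * P + P * A + Cᵀ * P * C + (γ ^ 2)⁻¹ • (P * B2 * B2ᵀ * P)
    - (Nmat C B1 D P)ᵀ * (Smat R D P)⁻¹ * Nmat C B1 D P + Q = 0

/-- An outer iterate at `Lv`: a symmetric solution of the inner GARE at `Lv` with `S(P)`
invertible and `(K(P), Lv)` stabilizing. -/
def OuterIterate {n m1 m2 : ℕ} (A C Q : Matrix (Fin n) (Fin n) ℝ)
    (B1 D : Matrix (Fin n) (Fin m1) ℝ) (B2 : Matrix (Fin n) (Fin m2) ℝ)
    (R : Matrix (Fin m1) (Fin m1) ℝ) (γ : ℝ) (Lv : Matrix (Fin m2) (Fin n) ℝ)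
    (P : Matrix (Fin n) (Fin n) ℝ) : Prop :=
  P.IsSymm ∧ IsUnit (Smat R D P).det ∧ InnerGARE A C Q B1 D B2 R γ Lv P ∧
    Stabilizing A C B1 D B2 (Kgain C B1 D R P) Lv

/-- `P_v*` is a stabilizing solution of the full GARE. -/
def StabilizingSolution {n m1 m2 : ℕ} (A C Q : Matrix (Fin n) (Fin n) ℝ)
    (B1 D : Matrix (Fin n) (Fin m1) ℝ) (B2 : Matrix (Fin n) (Fin m2) ℝ)
    (R : Matrix (Fin m1) (Fin m1) ℝ) (γ : ℝ) (P : Matrix (Fin n) (Fin n) ℝ) : Prop :=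
  P.IsSymm ∧ IsUnit (Smat R D P).det ∧ FullGARE A C Q B1 D B2 R γ P ∧
    Stabilizing A C B1 D B2 (Kgain C B1 D R P) ((γ ^ 2)⁻¹ • (B2ᵀ * P))

/-!
Let `L̂` and `K = K(P̂)` be the two gains, with closed loops `(X̂, Ẑ)` and `(X, Z)`. Subtracting
the two Lyapunov equations gives `𝓛_{X̂,Ẑ}(Π₁ - Π₂) = (KᵀRK - L̂ᵀRL̂) - (𝓛_{X̂,Ẑ} - 𝓛_{X,Z}) Π₂`,
which is `O(‖L̂ - K‖)`, and `L̂ - K = -[M̂]_uu⁻¹ ([ΔM]_ux + [ΔM]_uu K)` is `O(‖ΔM‖)`. The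
constants involve `‖[M̂]_uu⁻¹‖`, `‖L̂‖` and the norm of the inverse of the Kronecker matrix of
`𝓛_{X̂,Ẑ}`; these are continuous in `M̂ = M(P̂) + ΔM` wherever the hypothesis on `d` applies,
hence uniformly bounded on the compact set of symmetric `M(P) + Δ` with `‖P - P*‖ ≤ δ₀` and
`‖Δ‖ ≤ d/2`.
-/

attribute [local instance] Matrix.frobeniusNormedAddCommGroup Matrix.frobeniusNormedSpace

section FrobeniusNorm

variable {ι κ ι' κ' : Type*} [Fintype ι] [Fintype κ] [Fintype ι'] [Fintype κ']

theorem frobNorm_eq_norm (M : Matrix ι κ ℝ) : frobNorm M = ‖M‖ := by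
  simp only [frobNorm, frobenius_norm_def, Real.norm_eq_abs, Real.rpow_two, sq_abs,
    Real.sqrt_eq_rpow]

theorem Fintype.sum_comp_le_sum_of_injective {α β : Type*} [Fintype α] [Fintype β] {e : α → β}
    (he : e.Injective) {g : β → ℝ} (hg : ∀ b, 0 ≤ g b) : ∑ a, g (e a) ≤ ∑ b, g b := by
  simpa using (Finset.sum_map Finset.univ ⟨e, he⟩ g).symm.trans_le
    (Finset.sum_le_univ_sum_of_nonneg hg)

theorem Matrix.frobenius_norm_submatrix_le (M : Matrix ι κ ℝ) {e : ι' → ι} {f : κ' → κ}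
    (he : e.Injective) (hf : f.Injective) : ‖M.submatrix e f‖ ≤ ‖M‖ := by
  simp only [frobenius_norm_def]
  gcongr
  refine (Finset.sum_le_sum fun i _ => Fintype.sum_comp_le_sum_of_injective hf fun j => ?_).trans
    (Fintype.sum_comp_le_sum_of_injective he (g := fun i => ∑ j, ‖M i j‖ ^ (2 : ℝ)) fun i => ?_)
  all_goals positivity

theorem Matrix.frobenius_norm_transpose_mul_mul_sub_le (X Z : Matrix ι κ ℝ) (Y : Matrix ι ι ℝ) :
    ‖Xᵀ * Y * X - Zᵀ * Y * Z‖ ≤ ‖Y‖ * (‖X‖ + ‖Z‖) * ‖X - Z‖ := by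
  have h : Xᵀ * Y * X - Zᵀ * Y * Z = (X - Z)ᵀ * Y * X + Zᵀ * Y * (X - Z) := by
    simp only [transpose_sub, Matrix.sub_mul, Matrix.mul_sub]; abel
  rw [h]
  calc _ ≤ ‖X - Z‖ * ‖Y‖ * ‖X‖ + ‖Z‖ * ‖Y‖ * ‖X - Z‖ := by
        refine (norm_add_le _ _).trans (add_le_add ?_ ?_) <;>
        refine (frobenius_norm_mul _ _).trans ?_ <;>
        grw [frobenius_norm_mul, frobenius_norm_transpose]
    _ = _ := by ring

end FrobeniusNorm

section Lyapunov

variable {n : ℕ}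

def lyapKron (X Z : Matrix (Fin n) (Fin n) ℝ) : Matrix (Fin n × Fin n) (Fin n × Fin n) ℝ :=
  (1 : Matrix (Fin n) (Fin n) ℝ) ⊗ₖ Xᵀ + Xᵀ ⊗ₖ (1 : Matrix (Fin n) (Fin n) ℝ) + Zᵀ ⊗ₖ Zᵀ

theorem lyapKron_mulVec_vec (X Z Y : Matrix (Fin n) (Fin n) ℝ) :
    lyapKron X Z *ᵥ Y.vec = (lyapOp X Z Y).vec := by
  simp only [lyapKron, lyapOp, add_mulVec, kronecker_mulVec_vec, vec_add, transpose_one,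
    transpose_transpose, Matrix.mul_one, Matrix.one_mul]

theorem norm_replicateCol_vec (Y : Matrix (Fin n) (Fin n) ℝ) :
    ‖replicateCol Unit Y.vec‖ = ‖Y‖ := by
  simp only [frobenius_norm_def, replicateCol_apply, vec, Fintype.sum_prod_type,
    Fintype.sum_unique]
  rw [Finset.sum_comm]

theorem HurwitzKron.isUnit_det_lyapKron {X Z : Matrix (Fin n) (Fin n) ℝ} (h : HurwitzKron X Z) :
    IsUnit (lyapKron X Z).det := by
  rw [isUnit_iff_ne_zero]
  intro hdet
  have h0 : (0 : ℂ) ∈ spectrum ℂ ((lyapKron X Z).map (Complex.ofReal ·)) := by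
    rw [spectrum.zero_mem_iff, Matrix.isUnit_iff_isUnit_det, isUnit_iff_ne_zero, not_not,
      show (lyapKron X Z).map (Complex.ofReal ·) = Complex.ofRealHom.mapMatrix (lyapKron X Z)
        from rfl, ← RingHom.map_det, hdet, map_zero]
  simpa using h 0 h0

theorem norm_le_norm_inv_lyapKron_mul {X Z : Matrix (Fin n) (Fin n) ℝ}
    (h : IsUnit (lyapKron X Z).det) (Y : Matrix (Fin n) (Fin n) ℝ) :
    ‖Y‖ ≤ ‖(lyapKron X Z)⁻¹‖ * ‖lyapOp X Z Y‖ := by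
  have hY : Y.vec = (lyapKron X Z)⁻¹ *ᵥ (lyapOp X Z Y).vec := by
    rw [← lyapKron_mulVec_vec, mulVec_mulVec, nonsing_inv_mul _ h, one_mulVec]
  rw [← norm_replicateCol_vec Y, hY, replicateCol_mulVec, ← norm_replicateCol_vec (lyapOp X Z Y)]
  exact frobenius_norm_mul _ _

theorem lyapOp_sub (X Z Y₁ Y₂ : Matrix (Fin n) (Fin n) ℝ) :
    lyapOp X Z (Y₁ - Y₂) = lyapOp X Z Y₁ - lyapOp X Z Y₂ := by
  simp only [lyapOp, Matrix.mul_sub, Matrix.sub_mul]; abel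

theorem norm_lyapOp_sub_lyapOp_le (X₁ X₀ Z₁ Z₀ Y : Matrix (Fin n) (Fin n) ℝ) :
    ‖lyapOp X₁ Z₁ Y - lyapOp X₀ Z₀ Y‖ ≤ (2 * ‖X₁ - X₀‖ + (‖Z₁‖ + ‖Z₀‖) * ‖Z₁ - Z₀‖) * ‖Y‖ := by
  have h : lyapOp X₁ Z₁ Y - lyapOp X₀ Z₀ Y
      = (X₁ - X₀)ᵀ * Y + Y * (X₁ - X₀) + (Z₁ᵀ * Y * Z₁ - Z₀ᵀ * Y * Z₀) := by
    simp only [lyapOp, transpose_sub, Matrix.sub_mul, Matrix.mul_sub]; abel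
  rw [h]
  refine (norm_add_le_of_le (norm_add_le_of_le (frobenius_norm_mul _ _) (frobenius_norm_mul _ _))
    (Matrix.frobenius_norm_transpose_mul_mul_sub_le _ _ _)).trans_eq ?_
  rw [frobenius_norm_transpose]; ring

end Lyapunov

section CostPerturbation

variable {n : ℕ} {ι : Type*} [Fintype ι]

theorem norm_sub_le_of_lyapOp_eq {X₁ X₀ Z₁ Z₀ W Y₁ Y₂ : Matrix (Fin n) (Fin n) ℝ}
    {R : Matrix ι ι ℝ} {L₁ L₀ : Matrix ι (Fin n) ℝ} (hK : IsUnit (lyapKron X₁ Z₁).det)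
    (h₁ : lyapOp X₁ Z₁ Y₁ = W - L₁ᵀ * R * L₁) (h₀ : lyapOp X₀ Z₀ Y₂ = W - L₀ᵀ * R * L₀) :
    ‖Y₁ - Y₂‖ ≤ ‖(lyapKron X₁ Z₁)⁻¹‖ * (‖R‖ * (‖L₁‖ + ‖L₀‖) * ‖L₁ - L₀‖
      + (2 * ‖X₁ - X₀‖ + (‖Z₁‖ + ‖Z₀‖) * ‖Z₁ - Z₀‖) * ‖Y₂‖) := by
  have h : lyapOp X₁ Z₁ (Y₁ - Y₂)
      = -(L₁ᵀ * R * L₁ - L₀ᵀ * R * L₀) - (lyapOp X₁ Z₁ Y₂ - lyapOp X₀ Z₀ Y₂) := by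
    rw [lyapOp_sub, h₁, h₀]; abel
  refine (norm_le_norm_inv_lyapKron_mul hK _).trans (mul_le_mul_of_nonneg_left ?_ (norm_nonneg _))
  rw [h]
  refine (norm_sub_le _ _).trans (add_le_add ?_ (norm_lyapOp_sub_lyapOp_le _ _ _ _ _))
  rw [norm_neg]
  exact Matrix.frobenius_norm_transpose_mul_mul_sub_le _ _ _

theorem norm_sub_le_of_closedLoop_lyapOp_eq {X C W Y₁ Y₂ : Matrix (Fin n) (Fin n) ℝ}
    {B D : Matrix (Fin n) ι ℝ} {R : Matrix ι ι ℝ} {L₁ L₀ : Matrix ι (Fin n) ℝ} {κ ℓ : ℝ}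
    (hK₁ : IsUnit (lyapKron (X + B * L₁) (C + D * L₁)).det)
    (hK₀ : IsUnit (lyapKron (X + B * L₀) (C + D * L₀)).det)
    (hκ₁ : ‖(lyapKron (X + B * L₁) (C + D * L₁))⁻¹‖ ≤ κ)
    (hκ₀ : ‖(lyapKron (X + B * L₀) (C + D * L₀))⁻¹‖ ≤ κ) (hℓ₁ : ‖L₁‖ ≤ ℓ) (hℓ₀ : ‖L₀‖ ≤ ℓ)
    (h₁ : lyapOp (X + B * L₁) (C + D * L₁) Y₁ = W - L₁ᵀ * R * L₁)
    (h₀ : lyapOp (X + B * L₀) (C + D * L₀) Y₂ = W - L₀ᵀ * R * L₀) :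
    ‖Y₁ - Y₂‖ ≤ κ * (2 * ‖R‖ * ℓ + 2 * (‖B‖ + ‖D‖ * (‖C‖ + ‖D‖ * ℓ)) * (κ * (‖W‖ + ‖R‖ * ℓ ^ 2)))
      * ‖L₁ - L₀‖ := by
  have hℓ : 0 ≤ ℓ := (norm_nonneg _).trans hℓ₁
  have hκ : 0 ≤ κ := (norm_nonneg _).trans hκ₁
  have hY₂ : ‖Y₂‖ ≤ κ * (‖W‖ + ‖R‖ * ℓ ^ 2) := calc
    ‖Y₂‖ ≤ ‖(lyapKron (X + B * L₀) (C + D * L₀))⁻¹‖ * ‖W - L₀ᵀ * R * L₀‖ :=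
      h₀ ▸ norm_le_norm_inv_lyapKron_mul hK₀ Y₂
    _ ≤ κ * (‖W‖ + ‖R‖ * ℓ ^ 2) := by
      gcongr
      refine (norm_sub_le _ _).trans (add_le_add_right ?_ _)
      calc ‖L₀ᵀ * R * L₀‖ ≤ ‖L₀‖ * ‖R‖ * ‖L₀‖ := by
            grw [frobenius_norm_mul, frobenius_norm_mul, frobenius_norm_transpose]
        _ ≤ ℓ * ‖R‖ * ℓ := by gcongr
        _ = ‖R‖ * ℓ ^ 2 := by ring
  have hZ : ∀ L : Matrix ι (Fin n) ℝ, ‖L‖ ≤ ℓ → ‖C + D * L‖ ≤ ‖C‖ + ‖D‖ * ℓ := fun L hL => by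
    grw [norm_add_le, frobenius_norm_mul, hL]
  have hX : X + B * L₁ - (X + B * L₀) = B * (L₁ - L₀) := by rw [Matrix.mul_sub]; abel
  have hZ' : C + D * L₁ - (C + D * L₀) = D * (L₁ - L₀) := by rw [Matrix.mul_sub]; abel
  refine (norm_sub_le_of_lyapOp_eq hK₁ h₁ h₀).trans ?_
  rw [hX, hZ']
  grw [hκ₁, hℓ₁, hℓ₀, frobenius_norm_mul B, frobenius_norm_mul D, hZ L₁ hℓ₁, hZ L₀ hℓ₀, hY₂]
  apply le_of_eq; ring

end CostPerturbation

section Gains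

theorem Matrix.inv_mul_sub_inv_mul {ι κ : Type*} [Fintype ι] [DecidableEq ι]
    {S S' : Matrix ι ι ℝ} {N N' : Matrix ι κ ℝ} (hS : IsUnit S.det)
    (hS' : IsUnit S'.det) : S'⁻¹ * N' - S⁻¹ * N = S'⁻¹ * (N' - N - (S' - S) * (S⁻¹ * N)) := by
  simp only [Matrix.mul_sub, Matrix.sub_mul, ← Matrix.mul_assoc, nonsing_inv_mul _ hS',
    mul_nonsing_inv _ hS, Matrix.one_mul]
  abel

variable {n m1 m2 : ℕ}

def feedbackGain (M : Matrix (Fin n ⊕ Fin m1 ⊕ Fin m2) (Fin n ⊕ Fin m1 ⊕ Fin m2) ℝ) :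
    Matrix (Fin m1) (Fin n) ℝ :=
  -((blkUU M)⁻¹ * blkUX M)

theorem norm_blkUU_le (M : Matrix (Fin n ⊕ Fin m1 ⊕ Fin m2) (Fin n ⊕ Fin m1 ⊕ Fin m2) ℝ) :
    ‖blkUU M‖ ≤ ‖M‖ :=
  M.frobenius_norm_submatrix_le (e := Sum.inr ∘ Sum.inl) (f := Sum.inr ∘ Sum.inl)
    (Sum.inr_injective.comp Sum.inl_injective) (Sum.inr_injective.comp Sum.inl_injective)

theorem norm_blkUX_le (M : Matrix (Fin n ⊕ Fin m1 ⊕ Fin m2) (Fin n ⊕ Fin m1 ⊕ Fin m2) ℝ) :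
    ‖blkUX M‖ ≤ ‖M‖ :=
  M.frobenius_norm_submatrix_le (e := Sum.inr ∘ Sum.inl) (f := Sum.inl)
    (Sum.inr_injective.comp Sum.inl_injective) Sum.inl_injective

variable (A C Q : Matrix (Fin n) (Fin n) ℝ) (B1 D : Matrix (Fin n) (Fin m1) ℝ)
  (B2 : Matrix (Fin n) (Fin m2) ℝ) (R : Matrix (Fin m1) (Fin m1) ℝ) (γ : ℝ)

theorem feedbackGain_Mblk (P : Matrix (Fin n) (Fin n) ℝ) :
    feedbackGain (Mblk A C Q B1 D B2 R γ P) = Kgain C B1 D R P := rfl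

theorem norm_feedbackGain_sub_Kgain_le {P : Matrix (Fin n) (Fin n) ℝ}
    (Δ : Matrix (Fin n ⊕ Fin m1 ⊕ Fin m2) (Fin n ⊕ Fin m1 ⊕ Fin m2) ℝ)
    (hS : IsUnit (Smat R D P).det) (hS' : IsUnit (blkUU (Mblk A C Q B1 D B2 R γ P + Δ)).det) :
    ‖feedbackGain (Mblk A C Q B1 D B2 R γ P + Δ) - Kgain C B1 D R P‖
      ≤ ‖(blkUU (Mblk A C Q B1 D B2 R γ P + Δ))⁻¹‖ * (1 + ‖Kgain C B1 D R P‖) * ‖Δ‖ := by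
  have h := Matrix.inv_mul_sub_inv_mul (S' := blkUU (Mblk A C Q B1 D B2 R γ P + Δ))
    (N' := blkUX (Mblk A C Q B1 D B2 R γ P + Δ)) (N := Nmat C B1 D P) hS hS'
  have hUX : blkUX (Mblk A C Q B1 D B2 R γ P + Δ) - Nmat C B1 D P = blkUX Δ :=
    add_sub_cancel_left _ _
  have hUU : blkUU (Mblk A C Q B1 D B2 R γ P + Δ) - Smat R D P = blkUU Δ :=
    add_sub_cancel_left _ _
  rw [hUX, hUU] at h
  calc ‖feedbackGain (Mblk A C Q B1 D B2 R γ P + Δ) - Kgain C B1 D R P‖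
      = ‖(blkUU (Mblk A C Q B1 D B2 R γ P + Δ))⁻¹ * (blkUX Δ + blkUU Δ * Kgain C B1 D R P)‖ := by
        rw [feedbackGain, Kgain, neg_sub_neg, norm_sub_rev, h, Matrix.mul_neg, ← sub_eq_add_neg]
    _ ≤ ‖(blkUU (Mblk A C Q B1 D B2 R γ P + Δ))⁻¹‖ * (1 + ‖Kgain C B1 D R P‖) * ‖Δ‖ := by
        grw [frobenius_norm_mul, norm_add_le, frobenius_norm_mul, norm_blkUX_le, norm_blkUU_le]
        exact le_of_eq (by ring)

theorem Kgain_transpose_mul_mul (hR : R.IsSymm) {P : Matrix (Fin n) (Fin n) ℝ} (hP : P.IsSymm) :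
    (Kgain C B1 D R P)ᵀ * R * Kgain C B1 D R P
      = (Nmat C B1 D P)ᵀ * (Smat R D P)⁻¹ * R * (Smat R D P)⁻¹ * Nmat C B1 D P := by
  have hS : (Smat R D P)ᵀ = Smat R D P := by
    simp only [Smat, transpose_add, transpose_mul, transpose_transpose, hR.eq, hP.eq,
      Matrix.mul_assoc]
  simp only [Kgain, transpose_neg, transpose_mul, transpose_nonsing_inv, hS, Matrix.neg_mul,
    Matrix.mul_neg, neg_neg, Matrix.mul_assoc]

end Gains

section Continuity

theorem Matrix.continuousAt_inv_of_isUnit_det {ι : Type*} [Fintype ι] [DecidableEq ι]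
    {M : Matrix ι ι ℝ} (h : IsUnit M.det) : ContinuousAt Inv.inv M :=
  continuousAt_matrix_inv M (h.unit_spec ▸ NormedRing.inverse_continuousAt h.unit)

theorem continuous_lyapKron {n : ℕ} :
    Continuous fun q : Matrix (Fin n) (Fin n) ℝ × Matrix (Fin n) (Fin n) ℝ => lyapKron q.1 q.2 :=
  continuous_matrix fun i j => by
    simp only [lyapKron, Matrix.add_apply, kroneckerMap_apply, transpose_apply]
    fun_prop

variable {n m1 m2 : ℕ}

theorem continuous_blkUU :
    Continuous (blkUU : Matrix (Fin n ⊕ Fin m1 ⊕ Fin m2) (Fin n ⊕ Fin m1 ⊕ Fin m2) ℝ → _) :=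
  continuous_id.matrix_submatrix _ _

theorem continuous_blkUX :
    Continuous (blkUX : Matrix (Fin n ⊕ Fin m1 ⊕ Fin m2) (Fin n ⊕ Fin m1 ⊕ Fin m2) ℝ → _) :=
  continuous_id.matrix_submatrix _ _

theorem continuousAt_feedbackGain
    {M : Matrix (Fin n ⊕ Fin m1 ⊕ Fin m2) (Fin n ⊕ Fin m1 ⊕ Fin m2) ℝ}
    (h : IsUnit (blkUU M).det) : ContinuousAt feedbackGain M :=
  ((continuous_fst.matrix_mul continuous_snd).continuousAt.comp
    (((Matrix.continuousAt_inv_of_isUnit_det h).comp continuous_blkUU.continuousAt).prodMk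
      continuous_blkUX.continuousAt)).neg

variable (A C Q : Matrix (Fin n) (Fin n) ℝ) (B1 D : Matrix (Fin n) (Fin m1) ℝ)
  (B2 : Matrix (Fin n) (Fin m2) ℝ) (R : Matrix (Fin m1) (Fin m1) ℝ) (γ : ℝ)

theorem continuous_Mblk : Continuous (Mblk A C Q B1 D B2 R γ) :=
  continuous_matrix fun i j => by
    rcases i with i | i | i <;> rcases j with j | j | j <;>
      simp only [Mblk, of_apply, Nmat, Smat] <;> fun_prop

end Continuity

section BlockMatrix

open Metric Set Topology

variable {n m1 m2 : ℕ} (A C Q : Matrix (Fin n) (Fin n) ℝ) (B1 D : Matrix (Fin n) (Fin m1) ℝ)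
  (B2 : Matrix (Fin n) (Fin m2) ℝ) (R : Matrix (Fin m1) (Fin m1) ℝ) (γ : ℝ)

theorem Mblk_isSymm (hQ : Q.IsSymm) (hR : R.IsSymm) {P : Matrix (Fin n) (Fin n) ℝ}
    (hP : P.IsSymm) : (Mblk A C Q B1 D B2 R γ P).IsSymm := by
  have hxx : (Q + Aᵀ * P + P * A + Cᵀ * P * C).IsSymm := by
    simp only [IsSymm, transpose_add, transpose_mul, transpose_transpose, hP.eq, hQ.eq,
      Matrix.mul_assoc]
    abel
  have hS : (Smat R D P).IsSymm := by
    simp only [IsSymm, Smat, transpose_add, transpose_mul, transpose_transpose, hP.eq, hR.eq,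
      Matrix.mul_assoc]
  ext i j
  rcases i with i | i | i <;> rcases j with j | j | j <;>
    simp only [transpose_apply, Mblk, of_apply]
  · exact hxx.apply i j
  · exact hS.apply i j
  · exact ((isSymm_one (α := ℝ) (n := Fin m2)).smul (-γ ^ 2)).apply i j

theorem Mblk_sub_Mblk (P P' : Matrix (Fin n) (Fin n) ℝ) :
    Mblk A C Q B1 D B2 R γ P - Mblk A C Q B1 D B2 R γ P' = Mblk A C 0 B1 D B2 0 0 (P - P') := by
  ext i j
  rcases i with i | i | i <;> rcases j with j | j | j <;>
    simp only [Mblk, Nmat, Smat, of_apply, Matrix.add_apply, Matrix.sub_apply, Matrix.zero_apply,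
      transpose_apply, Matrix.smul_apply, smul_eq_mul, neg_mul, Matrix.mul_sub, Matrix.sub_mul,
      sub_self, zero_add, zero_mul, neg_zero, ne_eq, OfNat.ofNat_ne_zero, not_false_eq_true,
      zero_pow] <;> abel

theorem isSymm_Mblk_sub_Mblk {P P' : Matrix (Fin n) (Fin n) ℝ} (hP : P.IsSymm) (hP' : P'.IsSymm) :
    (Mblk A C Q B1 D B2 R γ P - Mblk A C Q B1 D B2 R γ P').IsSymm := by
  rw [Mblk_sub_Mblk]
  exact Mblk_isSymm _ _ _ _ _ _ _ _ isSymm_zero isSymm_zero (hP.sub hP')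

theorem holds_at_Mblk_add_of_norm_sub_le
    {G : Matrix (Fin n ⊕ Fin m1 ⊕ Fin m2) (Fin n ⊕ Fin m1 ⊕ Fin m2) ℝ → Prop}
    {Pstar : Matrix (Fin n) (Fin n) ℝ} (hPstar : Pstar.IsSymm) {δ₀ d : ℝ} (hδ₀ : 0 < δ₀)
    (hG : ∀ P : Matrix (Fin n) (Fin n) ℝ, P.IsSymm → ‖P - Pstar‖ < δ₀ →
      ∀ Δ : Matrix (Fin n ⊕ Fin m1 ⊕ Fin m2) (Fin n ⊕ Fin m1 ⊕ Fin m2) ℝ, Δ.IsSymm → ‖Δ‖ ≤ d →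
        G (Mblk A C Q B1 D B2 R γ P + Δ))
    {P : Matrix (Fin n) (Fin n) ℝ} (hP : P.IsSymm) (hPb : ‖P - Pstar‖ ≤ δ₀)
    {Δ : Matrix (Fin n ⊕ Fin m1 ⊕ Fin m2) (Fin n ⊕ Fin m1 ⊕ Fin m2) ℝ} (hΔ : Δ.IsSymm)
    (hΔb : ‖Δ‖ < d) : G (Mblk A C Q B1 D B2 R γ P + Δ) := by
  -- Move `P` slightly towards `P*` and absorb the resulting change of `M` into `Δ`.
  let P' : ℝ → Matrix (Fin n) (Fin n) ℝ := fun t => Pstar + t • (P - Pstar)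
  have hlim : Tendsto (fun t => Mblk A C Q B1 D B2 R γ (P' t)) (𝓝[<] 1)
      (𝓝 (Mblk A C Q B1 D B2 R γ P)) := by
    have h := ((continuous_Mblk A C Q B1 D B2 R γ).comp (by fun_prop : Continuous P')).tendsto 1
    rw [Function.comp_apply, show P' 1 = P by simp [P']] at h
    exact h.mono_left nhdsWithin_le_nhds
  obtain ⟨t, hnear, ht⟩ :=
    ((hlim.eventually (ball_mem_nhds _ (sub_pos.2 hΔb))).and (Ioo_mem_nhdsLT one_pos)).exists
  have hP't : ‖P' t - Pstar‖ < δ₀ := by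
    rw [add_sub_cancel_left, norm_smul, Real.norm_of_nonneg ht.1.le]
    nlinarith [norm_nonneg (P - Pstar), ht.2]
  have key := hG (P' t) (hPstar.add ((hP.sub hPstar).smul t)) hP't
    (Δ + (Mblk A C Q B1 D B2 R γ P - Mblk A C Q B1 D B2 R γ (P' t)))
    (hΔ.add (isSymm_Mblk_sub_Mblk A C Q B1 D B2 R γ hP
      (hPstar.add ((hP.sub hPstar).smul t))))
    ((norm_add_le _ _).trans (by rw [← dist_eq_norm, dist_comm]; linarith [mem_ball.1 hnear]))
  convert key using 1
  abel

variable (Lv : Matrix (Fin m2) (Fin n) ℝ)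

theorem Stabilizing.isUnit_det_lyapKron {L : Matrix (Fin m1) (Fin n) ℝ}
    (h : Stabilizing A C B1 D B2 L Lv) :
    IsUnit (lyapKron (A + B2 * Lv + B1 * L) (C + D * L)).det := by
  rw [add_right_comm]
  exact HurwitzKron.isUnit_det_lyapKron h

theorem exists_bound_of_isCompact
    {K : Set (Matrix (Fin n ⊕ Fin m1 ⊕ Fin m2) (Fin n ⊕ Fin m1 ⊕ Fin m2) ℝ)} (hK : IsCompact K)
    (hgood : ∀ M ∈ K, IsUnit (blkUU M).det ∧ Stabilizing A C B1 D B2 (feedbackGain M) Lv) :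
    ∃ β > 0, ∀ M ∈ K, ‖(blkUU M)⁻¹‖ ≤ β ∧
      ‖(lyapKron (A + B2 * Lv + B1 * feedbackGain M) (C + D * feedbackGain M))⁻¹‖ ≤ β ∧
      ‖feedbackGain M‖ ≤ β := by
  have hcont : ContinuousOn (fun M => ((blkUU M)⁻¹,
      (lyapKron (A + B2 * Lv + B1 * feedbackGain M) (C + D * feedbackGain M))⁻¹,
      feedbackGain M)) K := fun M hM => by
    obtain ⟨hS, hstab⟩ := hgood M hM
    have hL := continuousAt_feedbackGain hS
    refine ContinuousAt.continuousWithinAt (((Matrix.continuousAt_inv_of_isUnit_det hS).comp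
      continuous_blkUU.continuousAt).prodMk (ContinuousAt.prodMk ?_ hL))
    exact (Matrix.continuousAt_inv_of_isUnit_det (hstab.isUnit_det_lyapKron)).comp
      (f := fun M => lyapKron (A + B2 * Lv + B1 * feedbackGain M) (C + D * feedbackGain M))
      ((continuous_lyapKron.comp (by fun_prop : Continuous fun L : Matrix (Fin m1) (Fin n) ℝ =>
        (A + B2 * Lv + B1 * L, C + D * L))).continuousAt.comp hL)
  obtain ⟨β, hβ0, hβ⟩ := (hK.image_of_continuousOn hcont).isBounded.exists_pos_norm_le
  refine ⟨β, hβ0, fun M hM => ?_⟩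
  have h := hβ _ (mem_image_of_mem _ hM)
  exact ⟨(norm_fst_le _).trans h, ((norm_fst_le _).trans (norm_snd_le _)).trans h,
    ((norm_snd_le _).trans (norm_snd_le _)).trans h⟩

def perturbedBlocks (Pstar : Matrix (Fin n) (Fin n) ℝ) (δ₀ r : ℝ) :
    Set (Matrix (Fin n ⊕ Fin m1 ⊕ Fin m2) (Fin n ⊕ Fin m1 ⊕ Fin m2) ℝ) :=
  (fun p => Mblk A C Q B1 D B2 R γ p.1 + p.2) ''
    ((closedBall Pstar δ₀ ∩ {P | P.IsSymm}) ×ˢ (closedBall 0 r ∩ {Δ | Δ.IsSymm}))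

theorem isCompact_perturbedBlocks (Pstar : Matrix (Fin n) (Fin n) ℝ) (δ₀ r : ℝ) :
    IsCompact (perturbedBlocks A C Q B1 D B2 R γ Pstar δ₀ r) := by
  have hsymm : ∀ ι : Type, IsClosed {M : Matrix ι ι ℝ | M.IsSymm} := fun ι =>
    isClosed_eq continuous_id.matrix_transpose continuous_id
  exact (((isCompact_closedBall _ _).inter_right (hsymm _)).prod
    ((isCompact_closedBall _ _).inter_right (hsymm _))).image
    (((continuous_Mblk A C Q B1 D B2 R γ).comp continuous_fst).add continuous_snd)

theorem exists_uniform_bounds {Pstar : Matrix (Fin n) (Fin n) ℝ} (hPstar : Pstar.IsSymm)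
    {δ₀ d r : ℝ} (hδ₀ : 0 < δ₀) (hrd : r < d)
    (hd : ∀ P : Matrix (Fin n) (Fin n) ℝ, P.IsSymm → ‖P - Pstar‖ < δ₀ →
      ∀ Δ : Matrix (Fin n ⊕ Fin m1 ⊕ Fin m2) (Fin n ⊕ Fin m1 ⊕ Fin m2) ℝ, Δ.IsSymm → ‖Δ‖ ≤ d →
        IsUnit (blkUU (Mblk A C Q B1 D B2 R γ P + Δ)).det ∧
        Stabilizing A C B1 D B2 (feedbackGain (Mblk A C Q B1 D B2 R γ P + Δ)) Lv) :
    ∃ β > 0, ∀ P : Matrix (Fin n) (Fin n) ℝ, P.IsSymm → ‖P - Pstar‖ ≤ δ₀ →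
      ∀ Δ : Matrix (Fin n ⊕ Fin m1 ⊕ Fin m2) (Fin n ⊕ Fin m1 ⊕ Fin m2) ℝ, Δ.IsSymm → ‖Δ‖ ≤ r →
        IsUnit (blkUU (Mblk A C Q B1 D B2 R γ P + Δ)).det ∧
        IsUnit (lyapKron (A + B2 * Lv + B1 * feedbackGain (Mblk A C Q B1 D B2 R γ P + Δ))
          (C + D * feedbackGain (Mblk A C Q B1 D B2 R γ P + Δ))).det ∧
        ‖(blkUU (Mblk A C Q B1 D B2 R γ P + Δ))⁻¹‖ ≤ β ∧
        ‖(lyapKron (A + B2 * Lv + B1 * feedbackGain (Mblk A C Q B1 D B2 R γ P + Δ))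
          (C + D * feedbackGain (Mblk A C Q B1 D B2 R γ P + Δ)))⁻¹‖ ≤ β ∧
        ‖feedbackGain (Mblk A C Q B1 D B2 R γ P + Δ)‖ ≤ β := by
  have hgood : ∀ M ∈ perturbedBlocks A C Q B1 D B2 R γ Pstar δ₀ r,
      IsUnit (blkUU M).det ∧ Stabilizing A C B1 D B2 (feedbackGain M) Lv := by
    rintro _ ⟨⟨P, Δ⟩, ⟨⟨hPb, hP⟩, hΔb, hΔ⟩, rfl⟩
    exact holds_at_Mblk_add_of_norm_sub_le A C Q B1 D B2 R γ
      (G := fun M => IsUnit (blkUU M).det ∧ Stabilizing A C B1 D B2 (feedbackGain M) Lv)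
      hPstar hδ₀ hd hP
      (mem_closedBall_iff_norm.1 hPb) hΔ ((mem_closedBall_zero_iff.1 hΔb).trans_lt hrd)
  obtain ⟨β, hβ0, hβ⟩ := exists_bound_of_isCompact A C B1 D B2 Lv
    (isCompact_perturbedBlocks A C Q B1 D B2 R γ Pstar δ₀ r) hgood
  refine ⟨β, hβ0, fun P hP hPb Δ hΔ hΔb => ?_⟩
  have hM : Mblk A C Q B1 D B2 R γ P + Δ ∈ perturbedBlocks A C Q B1 D B2 R γ Pstar δ₀ r :=
    ⟨(P, Δ), ⟨⟨mem_closedBall_iff_norm.2 hPb, hP⟩, mem_closedBall_zero_iff.2 hΔb, hΔ⟩, rfl⟩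
  obtain ⟨hS, hstab⟩ := hgood _ hM
  exact ⟨hS, hstab.isUnit_det_lyapKron, hβ _ hM⟩

end BlockMatrix

theorem evaluation_error_bound_general (n m1 m2 : ℕ)
    (A C Q : Matrix (Fin n) (Fin n) ℝ) (B1 D : Matrix (Fin n) (Fin m1) ℝ)
    (B2 : Matrix (Fin n) (Fin m2) ℝ) (R : Matrix (Fin m1) (Fin m1) ℝ) (γ : ℝ)
    (hR : R.PosDef)
    (Lv : Matrix (Fin m2) (Fin n) ℝ) (Pstar : Matrix (Fin n) (Fin n) ℝ)
    (hPstar : Pstar.IsSymm)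
    (δ₀ : ℝ) (hδ₀pos : 0 < δ₀)
    (d : ℝ) (hdpos : 0 < d)
    (hd : ∀ Phat : Matrix (Fin n) (Fin n) ℝ, Phat.IsSymm → frobNorm (Phat - Pstar) < δ₀ →
      ∀ ΔM : Matrix (Fin n ⊕ Fin m1 ⊕ Fin m2) (Fin n ⊕ Fin m1 ⊕ Fin m2) ℝ,
        ΔM.IsSymm → frobNorm ΔM ≤ d →
        IsUnit (blkUU (Mblk A C Q B1 D B2 R γ Phat + ΔM)).det ∧
        Stabilizing A C B1 D B2
          (-((blkUU (Mblk A C Q B1 D B2 R γ Phat + ΔM))⁻¹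
              * blkUX (Mblk A C Q B1 D B2 R γ Phat + ΔM))) Lv) :
    ∃ c₃ > (0 : ℝ), ∀ c₂ > (0 : ℝ), ∃ δ : ℝ, 0 < δ ∧ δ ≤ d ∧
      ∀ Phat : Matrix (Fin n) (Fin n) ℝ, Phat.IsSymm → frobNorm (Phat - Pstar) < δ₀ →
        ∀ ΔM : Matrix (Fin n ⊕ Fin m1 ⊕ Fin m2) (Fin n ⊕ Fin m1 ⊕ Fin m2) ℝ,
          ΔM.IsSymm → frobNorm ΔM < δ →
          ∀ Pi1 Pi2 : Matrix (Fin n) (Fin n) ℝ, Pi1.IsSymm → Pi2.IsSymm →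
            lyapOp
              (A + B2 * Lv + B1 *
                (-((blkUU (Mblk A C Q B1 D B2 R γ Phat + ΔM))⁻¹
                    * blkUX (Mblk A C Q B1 D B2 R γ Phat + ΔM))))
              (C + D *
                (-((blkUU (Mblk A C Q B1 D B2 R γ Phat + ΔM))⁻¹
                    * blkUX (Mblk A C Q B1 D B2 R γ Phat + ΔM)))) Pi1 =
              -(Q - (γ ^ 2) • (Lvᵀ * Lv))
                - (-((blkUU (Mblk A C Q B1 D B2 R γ Phat + ΔM))⁻¹
                      * blkUX (Mblk A C Q B1 D B2 R γ Phat + ΔM)))ᵀ * R *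
                  (-((blkUU (Mblk A C Q B1 D B2 R γ Phat + ΔM))⁻¹
                      * blkUX (Mblk A C Q B1 D B2 R γ Phat + ΔM))) →
            lyapOp (A + B2 * Lv + B1 * Kgain C B1 D R Phat)
                (C + D * Kgain C B1 D R Phat) Pi2 =
              -(Q - (γ ^ 2) • (Lvᵀ * Lv))
                - (Nmat C B1 D Phat)ᵀ * (Smat R D Phat)⁻¹ * R * (Smat R D Phat)⁻¹
                    * Nmat C B1 D Phat →
            frobNorm (Pi1 - Pi2) ≤ c₃ * frobNorm ΔM ∧ c₃ * frobNorm ΔM < c₂ := by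
  simp only [frobNorm_eq_norm] at hd ⊢
  obtain ⟨β, hβ0, hβ⟩ := exists_uniform_bounds A C Q B1 D B2 R γ Lv hPstar hδ₀pos
    (half_lt_self hdpos) hd
  set W := -(Q - (γ ^ 2) • (Lvᵀ * Lv))
  set c := β * (2 * ‖R‖ * β + 2 * (‖B1‖ + ‖D‖ * (‖C‖ + ‖D‖ * β)) * (β * (‖W‖ + ‖R‖ * β ^ 2)))
  have hc : 0 < c * (β * (1 + β)) + 1 := by positivity
  refine ⟨_, hc, fun c₂ hc₂ => ⟨min (d / 2) (c₂ / (c * (β * (1 + β)) + 1)),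
    lt_min (half_pos hdpos) (div_pos hc₂ hc), (min_le_left _ _).trans (half_le_self hdpos.le),
    fun P hP hPb Δ hΔ hΔb Y₁ Y₂ _ _ h₁ h₂ => ⟨?_, ?_⟩⟩⟩
  · obtain ⟨hS₁, hK₁, hS₁β, hK₁β, hL₁β⟩ :=
      hβ P hP hPb.le Δ hΔ (hΔb.le.trans (min_le_left _ _))
    obtain ⟨hS₀, hK₀, -, hK₀β, hL₀β⟩ :=
      hβ P hP hPb.le 0 isSymm_zero (by simpa using (half_pos hdpos).le)
    simp only [add_zero, feedbackGain_Mblk] at hS₀ hK₀ hK₀β hL₀β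
    rw [← Kgain_transpose_mul_mul C B1 D R (isHermitian_iff_isSymm.1 hR.isHermitian) hP] at h₂
    have hcost := norm_sub_le_of_closedLoop_lyapOp_eq hK₁ hK₀ hK₁β hK₀β hL₁β hL₀β h₁ h₂
    have hgain := norm_feedbackGain_sub_Kgain_le A C Q B1 D B2 R γ Δ hS₀ hS₁
    calc ‖Y₁ - Y₂‖ ≤ c * ‖feedbackGain (Mblk A C Q B1 D B2 R γ P + Δ) - Kgain C B1 D R P‖ := hcost
      _ ≤ c * (β * (1 + β) * ‖Δ‖) := by grw [hgain, hS₁β, hL₀β]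
      _ ≤ (c * (β * (1 + β)) + 1) * ‖Δ‖ := by nlinarith [norm_nonneg Δ]
  · exact (lt_div_iff₀' hc).1 (hΔb.trans_le (min_le_right _ _))

/-- Bound on the policy-evaluation error induced by the disturbance `ΔM`. -/
theorem evaluation_error_bound (n m1 m2 : ℕ)
    (hn : 0 < n) (hm1 : 0 < m1) (hm2 : 0 < m2)
    (A C Q : Matrix (Fin n) (Fin n) ℝ) (B1 D : Matrix (Fin n) (Fin m1) ℝ)
    (B2 : Matrix (Fin n) (Fin m2) ℝ) (R : Matrix (Fin m1) (Fin m1) ℝ) (γ : ℝ)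
    (hQ : Q.PosSemidef) (hR : R.PosDef) (hγ : 0 < γ)
    (Lv : Matrix (Fin m2) (Fin n) ℝ) (Pstar : Matrix (Fin n) (Fin n) ℝ)
    (hPstar : Pstar.IsSymm) (hSstar : IsUnit (Smat R D Pstar).det)
    (hGARE : InnerGARE A C Q B1 D B2 R γ Lv Pstar)
    (hstab : Stabilizing A C B1 D B2 (Kgain C B1 D R Pstar) Lv)
    (δ₀ : ℝ) (hδ₀pos : 0 < δ₀)
    (hδ₀ : ∀ P : Matrix (Fin n) (Fin n) ℝ, P.IsSymm → frobNorm (P - Pstar) < δ₀ →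
      IsUnit (Smat R D P).det ∧ Stabilizing A C B1 D B2 (Kgain C B1 D R P) Lv)
    (d : ℝ) (hdpos : 0 < d)
    (hd : ∀ Phat : Matrix (Fin n) (Fin n) ℝ, Phat.IsSymm → frobNorm (Phat - Pstar) < δ₀ →
      ∀ ΔM : Matrix (Fin n ⊕ Fin m1 ⊕ Fin m2) (Fin n ⊕ Fin m1 ⊕ Fin m2) ℝ,
        ΔM.IsSymm → frobNorm ΔM ≤ d →
        IsUnit (blkUU (Mblk A C Q B1 D B2 R γ Phat + ΔM)).det ∧
        Stabilizing A C B1 D B2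
          (-((blkUU (Mblk A C Q B1 D B2 R γ Phat + ΔM))⁻¹
              * blkUX (Mblk A C Q B1 D B2 R γ Phat + ΔM))) Lv) :
    ∃ c₃ > (0 : ℝ), ∀ c₂ > (0 : ℝ), ∃ δ : ℝ, 0 < δ ∧ δ ≤ d ∧
      ∀ Phat : Matrix (Fin n) (Fin n) ℝ, Phat.IsSymm → frobNorm (Phat - Pstar) < δ₀ →
        ∀ ΔM : Matrix (Fin n ⊕ Fin m1 ⊕ Fin m2) (Fin n ⊕ Fin m1 ⊕ Fin m2) ℝ,
          ΔM.IsSymm → frobNorm ΔM < δ →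
          ∀ Pi1 Pi2 : Matrix (Fin n) (Fin n) ℝ, Pi1.IsSymm → Pi2.IsSymm →
            lyapOp
              (A + B2 * Lv + B1 *
                (-((blkUU (Mblk A C Q B1 D B2 R γ Phat + ΔM))⁻¹
                    * blkUX (Mblk A C Q B1 D B2 R γ Phat + ΔM))))
              (C + D *
                (-((blkUU (Mblk A C Q B1 D B2 R γ Phat + ΔM))⁻¹
                    * blkUX (Mblk A C Q B1 D B2 R γ Phat + ΔM)))) Pi1 =
              -(Q - (γ ^ 2) • (Lvᵀ * Lv))
                - (-((blkUU (Mblk A C Q B1 D B2 R γ Phat + ΔM))⁻¹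
                      * blkUX (Mblk A C Q B1 D B2 R γ Phat + ΔM)))ᵀ * R *
                  (-((blkUU (Mblk A C Q B1 D B2 R γ Phat + ΔM))⁻¹
                      * blkUX (Mblk A C Q B1 D B2 R γ Phat + ΔM))) →
            lyapOp (A + B2 * Lv + B1 * Kgain C B1 D R Phat)
                (C + D * Kgain C B1 D R Phat) Pi2 =
              -(Q - (γ ^ 2) • (Lvᵀ * Lv))
                - (Nmat C B1 D Phat)ᵀ * (Smat R D Phat)⁻¹ * R * (Smat R D Phat)⁻¹
                    * Nmat C B1 D Phat →
            frobNorm (Pi1 - Pi2) ≤ c₃ * frobNorm ΔM ∧ c₃ * frobNorm ΔM < c₂ :=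
  evaluation_error_bound_general n m1 m2 A C Q B1 D B2 R γ hR Lv Pstar hPstar δ₀ hδ₀pos d hdpos hd

end
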